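/- arXiv:2605.28172 — 4 statements merged into one kernel-verified Lean document; each statement's English description precedes it below -/
import Mathlib

section
/- Fix θ' ∈ [0, π], a unit vector a ∈ ℝ³, and v ∈ ℝ³. Then max over θ ∈ [0,θ'] and unit vectors w of ⟨Exp(θw)a, v⟩ equals ‖v‖ if the angle α between a and v satisfies α ≤ θ', and equals ‖v‖·cos(α − θ') if α > θ'. -/
open Matrix Set MeasureTheory Pointwise

noncomputable section

abbrev E3 := EuclideanSpace ℝ (Fin 3)

def tv (p : E3) : Fin 3 → ℝ := (WithLp.equiv 2 (Fin 3 → ℝ)) p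

def ofv (x : Fin 3 → ℝ) : E3 := (WithLp.equiv 2 (Fin 3 → ℝ)).symm x

def isSO3 (R : Matrix (Fin 3) (Fin 3) ℝ) : Prop := R.transpose * R = 1 ∧ R.det = 1

abbrev Pose := Matrix (Fin 3) (Fin 3) ℝ × E3

def act (T : Pose) (p : E3) : E3 := ofv (T.1.mulVec (tv p)) + T.2

def pmul (T₁ T₂ : Pose) : Pose := (T₁.1 * T₂.1, ofv (T₁.1.mulVec (tv T₂.2)) + T₁.2)

def rotDist (R₁ R₂ : Matrix (Fin 3) (Fin 3) ℝ) : ℝ :=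
  Real.arccos (((R₁ * R₂.transpose).trace - 1) / 2)

def phiS (𝒮 : Set E3) (𝒯 : Set Pose) : Set E3 := {q | ∃ p ∈ 𝒮, ∃ T ∈ 𝒯, q = act T p}

def hat (w : E3) : Matrix (Fin 3) (Fin 3) ℝ :=
  !![0, -(tv w 2), tv w 1; tv w 2, 0, -(tv w 0); -(tv w 1), tv w 0, 0]

def rod (θ : ℝ) (w : E3) : Matrix (Fin 3) (Fin 3) ℝ :=
  1 + Real.sin θ • hat w + (1 - Real.cos θ) • (hat w * hat w)

/-!
By Rodrigues' formula, for a unit axis `w` the rotated vector is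
`r = cos θ • a + sin θ • (w × a) + ((1 - cos θ) * ⟪w, a⟫) • w`, a unit vector with
`⟪a, r⟫ ≥ cos θ`, so `∠(a, r) ≤ θ ≤ θ'`. When `α > θ'`, the triangle inequality for angles gives
`∠(r, v) ≥ α - θ'`, hence `⟪r, v⟫ ≤ ‖v‖ cos (α - θ')`; otherwise Cauchy–Schwarz gives `‖v‖`.
Conversely, let `u` be a unit vector orthogonal to `a` pointing along the component of `v`
orthogonal to `a`. The axis `a × u` rotates `a` to `cos θ • a + sin θ • u`, whose inner product
with `v` is `‖v‖ cos (α - θ)`; take `θ = min α θ'`.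
-/

open Real InnerProductGeometry
open scoped RealInnerProductSpace

section UnitVectors

variable {V : Type*} [NormedAddCommGroup V] [InnerProductSpace ℝ V]

lemma inner_eq_norm_mul_cos_angle {a : V} (ha : ‖a‖ = 1) (v : V) :
    ⟪a, v⟫ = ‖v‖ * cos (angle a v) := by
  rw [← cos_angle_mul_norm_mul_norm, ha]; ring

lemma angle_le_of_cos_le_inner {x y : V} (hx : ‖x‖ = 1) (hy : ‖y‖ = 1) {θ : ℝ}
    (hθ : θ ∈ Set.Icc 0 π) (h : cos θ ≤ ⟪x, y⟫) : angle x y ≤ θ := by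
  rw [angle, hx, hy, mul_one, div_one, ← arccos_cos hθ.1 hθ.2]
  exact arccos_le_arccos h

lemma inner_le_norm_mul_cos_sub {a r v : V} (hr : ‖r‖ = 1) {θ : ℝ}
    (har : angle a r ≤ θ) (hθ : θ ≤ angle a v) :
    ⟪r, v⟫ ≤ ‖v‖ * cos (angle a v - θ) := by
  rw [inner_eq_norm_mul_cos_angle hr]
  have := angle_le_angle_add_angle a r v
  gcongr
  exact cos_le_cos_of_nonneg_of_le_pi (by linarith) (angle_le_pi r v) (by linarith)

lemma norm_sub_inner_smul_eq_norm_mul_sin {a : V} (ha : ‖a‖ = 1) (v : V) :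
    ‖v - ⟪a, v⟫ • a‖ = ‖v‖ * sin (angle a v) := by
  have hsq : ‖v - ⟪a, v⟫ • a‖ ^ 2 = (‖v‖ * sin (angle a v)) ^ 2 := by
    rw [norm_sub_sq_real, inner_smul_right, norm_smul, ha, inner_eq_norm_mul_cos_angle ha,
      real_inner_comm, inner_eq_norm_mul_cos_angle ha, Real.norm_eq_abs, mul_one, sq_abs,
      mul_pow, mul_pow, sin_sq]
    ring
  exact (sq_eq_sq₀ (norm_nonneg _) (mul_nonneg (norm_nonneg v) (sin_angle_nonneg a v))).1 hsq

lemma exists_norm_eq_one_inner_eq_zero [FiniteDimensional ℝ V]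
    (hV : 2 ≤ Module.finrank ℝ V) (a : V) : ∃ u : V, ‖u‖ = 1 ∧ ⟪a, u⟫ = 0 := by
  have hspan : Module.finrank ℝ (ℝ ∙ a) ≤ 1 := by
    simpa using finrank_span_le_card ({a} : Set V)
  have hpos : 0 < Module.finrank ℝ (ℝ ∙ a)ᗮ := by
    have := (ℝ ∙ a).finrank_add_finrank_orthogonal
    omega
  obtain ⟨u, hu⟩ := Module.finrank_pos_iff_exists_ne_zero.1 hpos
  have hu0 : (u : V) ≠ 0 := by simpa using hu
  refine ⟨‖(u : V)‖⁻¹ • (u : V), norm_smul_inv_norm hu0, ?_⟩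
  rw [inner_smul_right, Submodule.mem_orthogonal_singleton_iff_inner_right.1 u.2, mul_zero]

lemma exists_unit_orthogonal_inner_eq_norm_mul_sin [FiniteDimensional ℝ V]
    (hV : 2 ≤ Module.finrank ℝ V) {a : V} (ha : ‖a‖ = 1) (v : V) :
    ∃ u : V, ‖u‖ = 1 ∧ ⟪a, u⟫ = 0 ∧ ⟪u, v⟫ = ‖v‖ * sin (angle a v) := by
  set p := v - ⟪a, v⟫ • a
  have hap : ⟪a, p⟫ = 0 := by
    simp [p, inner_sub_right, inner_smul_right, ha]
  suffices ∃ u : V, ‖u‖ = 1 ∧ ⟪a, u⟫ = 0 ∧ ⟪u, p⟫ = ‖p‖ by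
    obtain ⟨u, hu, hau, hup⟩ := this
    refine ⟨u, hu, hau, ?_⟩
    have huv : ⟪u, v⟫ = ⟪u, p⟫ := by
      rw [inner_sub_right, inner_smul_right, real_inner_comm a u, hau, mul_zero, sub_zero]
    rw [huv, hup, norm_sub_inner_smul_eq_norm_mul_sin ha]
  rcases eq_or_ne p 0 with hp | hp
  · obtain ⟨u, hu, hau⟩ := exists_norm_eq_one_inner_eq_zero hV a
    exact ⟨u, hu, hau, by simp [hp]⟩
  · refine ⟨‖p‖⁻¹ • p, norm_smul_inv_norm hp, by rw [inner_smul_right, hap, mul_zero], ?_⟩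
    rw [real_inner_smul_left, real_inner_self_eq_norm_sq]
    field_simp

end UnitVectors

namespace E3

def cross (x y : E3) : E3 := ofv (tv x ⨯₃ tv y)

lemma inner_eq_dotProduct (x y : E3) : ⟪x, y⟫ = tv x ⬝ᵥ tv y :=
  dotProduct_comm _ _

lemma hat_mulVec (w : E3) (x : Fin 3 → ℝ) : hat w *ᵥ x = tv w ⨯₃ x := by
  ext i
  fin_cases i <;> simp [hat, cross_apply, mulVec, dotProduct, Fin.sum_univ_three] <;> ring

lemma inner_self_cross (w x : E3) : ⟪w, cross w x⟫ = 0 := by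
  simp [inner_eq_dotProduct, cross, tv, ofv, dot_self_cross]

lemma inner_cross_self (w x : E3) : ⟪x, cross w x⟫ = 0 := by
  simp [inner_eq_dotProduct, cross, tv, ofv, dot_cross_self]

lemma neg_cross (x y : E3) : -cross x y = cross y x := by
  rw [cross, cross, ← cross_anticomm (tv x)]
  rfl

lemma cross_cross_self (w x : E3) : cross w (cross w x) = ⟪w, x⟫ • w - ⟪w, w⟫ • x := by
  rw [inner_eq_dotProduct, inner_eq_dotProduct]
  simp [cross, tv, ofv, cross_cross_eq_smul_sub_smul']

lemma inner_cross_cross (u v w x : E3) :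
    ⟪cross u v, cross w x⟫ = ⟪u, w⟫ * ⟪v, x⟫ - ⟪u, x⟫ * ⟪v, w⟫ := by
  simp [inner_eq_dotProduct, cross, tv, ofv, cross_dot_cross]

def rotate (θ : ℝ) (w x : E3) : E3 := ofv (rod θ w *ᵥ tv x)

lemma rotate_eq_add_cross (θ : ℝ) (w x : E3) :
    rotate θ w x = x + sin θ • cross w x + (1 - cos θ) • cross w (cross w x) := by
  simp only [rotate, rod, add_mulVec, smul_mulVec, ← mulVec_mulVec, hat_mulVec, one_mulVec]
  rfl

section Rotation

variable {w : E3} (θ : ℝ) (x : E3)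

lemma rotate_eq_of_norm_eq_one (hw : ‖w‖ = 1) :
    rotate θ w x = cos θ • x + sin θ • cross w x + ((1 - cos θ) * ⟪w, x⟫) • w := by
  rw [rotate_eq_add_cross, cross_cross_self, real_inner_self_eq_norm_sq, hw]
  module

lemma norm_rotate (hw : ‖w‖ = 1) : ‖rotate θ w x‖ = ‖x‖ := by
  have hww : ⟪w, w⟫ = 1 := by rw [real_inner_self_eq_norm_sq, hw, one_pow]
  have hcc : ⟪cross w x, cross w x⟫ = ‖x‖ ^ 2 - ⟪w, x⟫ ^ 2 := by
    rw [inner_cross_cross, hww, real_inner_self_eq_norm_sq, real_inner_comm w x]; ring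
  have hsq : ‖rotate θ w x‖ ^ 2 = ‖x‖ ^ 2 := by
    have hcw : ⟪cross w x, w⟫ = 0 := by rw [real_inner_comm, inner_self_cross]
    have hcx : ⟪cross w x, x⟫ = 0 := by rw [real_inner_comm, inner_cross_self]
    rw [← real_inner_self_eq_norm_sq, rotate_eq_of_norm_eq_one θ x hw]
    simp only [inner_add_left, inner_add_right, real_inner_smul_left, real_inner_smul_right,
      hww, hcc, hcw, hcx, inner_self_cross, inner_cross_self, real_inner_comm w x]
    linear_combination (‖x‖ ^ 2 - ⟪w, x⟫ ^ 2) * sin_sq_add_cos_sq θ +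
      cos θ ^ 2 * real_inner_self_eq_norm_sq x
  exact (sq_eq_sq₀ (norm_nonneg _) (norm_nonneg _)).1 hsq

lemma inner_rotate_self (hw : ‖w‖ = 1) :
    ⟪x, rotate θ w x⟫ = cos θ * ‖x‖ ^ 2 + (1 - cos θ) * ⟪w, x⟫ ^ 2 := by
  rw [rotate_eq_of_norm_eq_one θ x hw]
  simp only [inner_add_right, real_inner_smul_right, inner_cross_self,
    real_inner_self_eq_norm_sq, real_inner_comm w x]
  ring

lemma cos_le_inner_rotate_self (hw : ‖w‖ = 1) (hx : ‖x‖ = 1) :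
    cos θ ≤ ⟪x, rotate θ w x⟫ := by
  rw [inner_rotate_self θ x hw, hx]
  nlinarith [cos_le_one θ, sq_nonneg ⟪w, x⟫]

lemma norm_cross_eq_one {a u : E3} (ha : ‖a‖ = 1) (hu : ‖u‖ = 1) (hau : ⟪a, u⟫ = 0) :
    ‖cross a u‖ = 1 := by
  have : ‖cross a u‖ ^ 2 = 1 := by
    rw [← real_inner_self_eq_norm_sq, inner_cross_cross, real_inner_self_eq_norm_sq,
      real_inner_self_eq_norm_sq, ha, hu, hau]
    ring
  exact (pow_eq_one_iff_of_nonneg (norm_nonneg _) two_ne_zero).1 this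

lemma rotate_cross_self {a u : E3} (ha : ‖a‖ = 1) (hu : ‖u‖ = 1) (hau : ⟪a, u⟫ = 0) :
    rotate θ (cross a u) a = cos θ • a + sin θ • u := by
  have hwa : ⟪cross a u, a⟫ = 0 := by rw [real_inner_comm, inner_self_cross]
  have hcross : cross (cross a u) a = u := by
    rw [← neg_cross, cross_cross_self, hau, real_inner_self_eq_norm_sq, ha]
    simp
  rw [rotate_eq_of_norm_eq_one θ a (norm_cross_eq_one ha hu hau), hwa, hcross, mul_zero, zero_smul,
    add_zero]

end Rotation

lemma angle_rotate_le {a w : E3} (ha : ‖a‖ = 1) (hw : ‖w‖ = 1) {θ : ℝ} (hθ : θ ∈ Set.Icc 0 π) :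
    angle a (rotate θ w a) ≤ θ := by
  refine angle_le_of_cos_le_inner ha ((norm_rotate θ a hw).trans ha) hθ ?_
  exact cos_le_inner_rotate_self θ a hw ha

lemma exists_inner_rotate_eq {a : E3} (ha : ‖a‖ = 1) (v : E3) (θ : ℝ) :
    ∃ w : E3, ‖w‖ = 1 ∧ ⟪rotate θ w a, v⟫ = ‖v‖ * cos (angle a v - θ) := by
  obtain ⟨u, hu, hau, huv⟩ :=
    exists_unit_orthogonal_inner_eq_norm_mul_sin (by simp) ha v
  refine ⟨cross a u, norm_cross_eq_one ha hu hau, ?_⟩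
  rw [rotate_cross_self θ ha hu hau, inner_add_left, real_inner_smul_left,
    real_inner_smul_left, huv, inner_eq_norm_mul_cos_angle ha, cos_sub]
  ring

end E3

open E3 in
/-- closed form for the maximal inner product ⟨Exp(θw)a, v⟩ over
θ ∈ [0,θ'] and unit axes w. -/
theorem stmt_10 (θ' : ℝ) (hθ' : θ' ∈ Set.Icc 0 Real.pi) (a v : E3) (ha : ‖a‖ = 1)
    (α : ℝ) (hα : α = Real.arccos ((inner ℝ a v : ℝ) / (‖a‖ * ‖v‖))) :
    IsGreatest
      {x : ℝ | ∃ θ ∈ Set.Icc 0 θ', ∃ w : E3, ‖w‖ = 1 ∧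
        x = inner ℝ (ofv ((rod θ w).mulVec (tv a))) v}
      (if α ≤ θ' then ‖v‖ else ‖v‖ * Real.cos (α - θ')) := by
  obtain rfl : α = angle a v := hα
  obtain ⟨hθ'0, hθ'π⟩ := hθ'
  constructor
  · obtain ⟨w, hw, hval⟩ := exists_inner_rotate_eq ha v (min (angle a v) θ')
    refine ⟨_, ⟨le_min (angle_nonneg a v) hθ'0, min_le_right _ _⟩, w, hw, hval.symm ▸ ?_⟩
    split_ifs with h
    · rw [min_eq_left h, sub_self, cos_zero, mul_one]
    · rw [min_eq_right (le_of_not_ge h)]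
  · rintro _ ⟨θ, hθ, w, hw, rfl⟩
    change ⟪rotate θ w a, v⟫ ≤ _
    have hr : ‖rotate θ w a‖ = 1 := (norm_rotate θ a hw).trans ha
    split_ifs with h
    · simpa [hr] using real_inner_le_norm (rotate θ w a) v
    · have har := angle_rotate_le ha hw ⟨hθ.1, hθ.2.trans hθ'π⟩
      exact inner_le_norm_mul_cos_sub hr (har.trans hθ.2) (le_of_not_ge h)
end
end

section
/- Let s₁ ≤ s₂ ≤ ... ≤ s_L be real numbers, δ ∈ (0,1), and define C = s_p where p = ⌈(1−δ)(L+1)⌉, with the convention C = +∞ if p > L. If s₀, s₁, ..., s_L are exchangeable real random variables, then Prob(s₀ ≤ C(s₁,...,s_L)) ≥ 1 − δ, where C(s₁,...,s_L) is the p-th order statistic of the augmented sample (s₁,...,s_L,+∞). -/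
/-!
Call `#{i | s i < s j}` the rank of `j`. In any real vector of length `n`, at most `n - p`
indices have rank `≥ p`: if there are any, they all lie weakly above the one of least value, so
they avoid the `≥ p` indices strictly below it. By exchangeability every index has the same
probability of rank `≥ p`, hence `n · P(rank 0 ≥ p) ≤ n - p`, and with `n = L + 1`,
`p = ⌈(1 - δ) n⌉` this is at most `δ n`. On the complementary event fewer than `p` of the
`s (i + 1)` lie strictly below `s 0`, which forces `s 0` below the `p`-th order statistic.
-/

open MeasureTheory

noncomputable section

/-- The `p`-th smallest value of `f : Fin L → ℝ` (1-indexed): the least `t` such that at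
least `p` of the values are `≤ t`. -/
def orderStat (L : ℕ) (f : Fin L → ℝ) (p : ℕ) : ℝ :=
  sInf {t : ℝ | p ≤ (Finset.univ.filter fun i => f i ≤ t).card}

open Finset
open scoped ENNReal

section Rank

variable {ι : Type*} [Fintype ι]

def rankCount (v : ι → ℝ) (j : ι) : ℕ := #{i | v i < v j}

lemma rankCount_comp_perm (v : ι → ℝ) (σ : Equiv.Perm ι) (j : ι) :
    rankCount (v ∘ σ) j = rankCount v (σ j) :=
  card_equiv σ (by simp)

lemma rankCount_zero {n : ℕ} (v : Fin (n + 1) → ℝ) :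
    rankCount v 0 = #{i : Fin n | v i.succ < v 0} := by
  simp only [rankCount, card_filter, Fin.sum_univ_succ, lt_irrefl, if_false, zero_add]

lemma measurable_rankCount (j : ι) : Measurable fun v : ι → ℝ => rankCount v j := by
  simp_rw [rankCount, card_filter]
  exact Finset.measurable_sum _ fun i _ => Measurable.ite
    (measurableSet_lt (measurable_pi_apply i) (measurable_pi_apply j)) measurable_const
    measurable_const

lemma card_rankCount_ge_le (v : ι → ℝ) (p : ℕ) :
    #{j | p ≤ rankCount v j} ≤ Fintype.card ι - p := by
  classical
  set H : Finset ι := {j | p ≤ rankCount v j}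
  obtain hH | hH := H.eq_empty_or_nonempty
  · simp [hH]
  obtain ⟨j₀, hj₀, hmin⟩ := H.exists_min_image v hH
  have hdisj : Disjoint H ({i | v i < v j₀} : Finset ι) :=
    disjoint_filter.2 fun i _ hi hlt => (hmin i (mem_filter.2 ⟨mem_univ _, hi⟩)).not_gt hlt
  have hunion := card_union_of_disjoint hdisj
  have hle := card_le_univ (H ∪ ({i | v i < v j₀} : Finset ι))
  have hp : p ≤ rankCount v j₀ := (mem_filter.1 hj₀).2
  rw [rankCount] at hp
  omega

end Rank

lemma le_orderStat_of_card_lt {L p : ℕ} (hpL : p ≤ L) (f : Fin L → ℝ) {x : ℝ}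
    (hx : #{i | f i < x} < p) : x ≤ orderStat L f p := by
  obtain ⟨M, hM⟩ := (Set.finite_range f).bddAbove
  refine le_csInf ⟨M, ?_⟩ fun t ht => ?_
  · rw [Set.mem_ofPred_eq, filter_true_of_mem fun i _ => hM (Set.mem_range_self i)]
    simpa using hpL
  · by_contra! htx
    have : #{i | f i ≤ t} ≤ #{i | f i < x} :=
      card_le_card (monotone_filter_right _ fun _ _ h => h.trans_lt htx)
    exact absurd (ht.trans this) hx.not_ge

def Exchangeable {ι Ω : Type*} [MeasurableSpace Ω] (μ : Measure Ω) (s : ι → Ω → ℝ) : Prop :=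
  ∀ σ : Equiv.Perm ι, μ.map (fun ω i => s (σ i) ω) = μ.map (fun ω i => s i ω)

namespace Exchangeable

variable {ι Ω : Type*} [MeasurableSpace Ω] {μ : Measure Ω} {s : ι → Ω → ℝ}

lemma measure_comp_perm (hs : Exchangeable μ s) (hmeas : ∀ i, Measurable (s i))
    (σ : Equiv.Perm ι) {A : Set (ι → ℝ)} (hA : MeasurableSet A) :
    μ {ω | (fun i => s (σ i) ω) ∈ A} = μ {ω | (fun i => s i ω) ∈ A} := by
  have hσ : Measurable fun ω i => s (σ i) ω := measurable_pi_lambda _ fun i => hmeas (σ i)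
  change μ ((fun ω i => s (σ i) ω) ⁻¹' A) = μ ((fun ω i => s i ω) ⁻¹' A)
  rw [← Measure.map_apply hσ hA, hs σ, Measure.map_apply (measurable_pi_lambda _ hmeas) hA]

variable [Fintype ι]

lemma measure_rankCount_ge_eq [DecidableEq ι] (hs : Exchangeable μ s)
    (hmeas : ∀ i, Measurable (s i)) (p : ℕ) (j k : ι) :
    μ {ω | p ≤ rankCount (fun i => s i ω) j} = μ {ω | p ≤ rankCount (fun i => s i ω) k} := by
  have hA : MeasurableSet {v : ι → ℝ | p ≤ rankCount v j} :=
    measurable_rankCount j measurableSet_Ici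
  have h := hs.measure_comp_perm hmeas (Equiv.swap j k) hA
  simp only [Set.mem_ofPred_eq] at h
  rw [← h]
  congr! 4 with ω
  exact (rankCount_comp_perm (fun i => s i ω) (Equiv.swap j k) j).trans (by simp)

lemma card_mul_measure_rankCount_ge_le (hs : Exchangeable μ s)
    (hmeas : ∀ i, Measurable (s i)) (p : ℕ) (j : ι) :
    Fintype.card ι * μ {ω | p ≤ rankCount (fun i => s i ω) j}
      ≤ (Fintype.card ι - p : ℕ) * μ Set.univ := by
  have hE : ∀ k, MeasurableSet {ω | p ≤ rankCount (fun i => s i ω) k} := fun k =>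
    (measurable_rankCount k).comp (measurable_pi_lambda _ hmeas) measurableSet_Ici
  calc Fintype.card ι * μ {ω | p ≤ rankCount (fun i => s i ω) j}
      = ∑ k, μ {ω | p ≤ rankCount (fun i => s i ω) k} := by
        classical simp [hs.measure_rankCount_ge_eq hmeas p _ j]
    _ = ∫⁻ ω, ∑ k, {ω | p ≤ rankCount (fun i => s i ω) k}.indicator 1 ω ∂μ := by
        rw [lintegral_finsetSum _ fun k _ => measurable_one.indicator (hE k)]
        simp_rw [lintegral_indicator_one (hE _)]
    _ = ∫⁻ ω, (#{k | p ≤ rankCount (fun i => s i ω) k} : ℝ≥0∞) ∂μ := by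
        simp only [Set.indicator_apply, Set.mem_ofPred_eq, Pi.one_apply, sum_boole]
    _ ≤ ∫⁻ _, ((Fintype.card ι - p : ℕ) : ℝ≥0∞) ∂μ :=
        lintegral_mono fun ω => Nat.cast_le.2 (card_rankCount_ge_le (fun i => s i ω) p)
    _ = (Fintype.card ι - p : ℕ) * μ Set.univ := lintegral_const _

end Exchangeable

lemma natCast_sub_ceil_le (n : ℕ) (δ : ℝ) :
    ((n - ⌈(1 - δ) * n⌉₊ : ℕ) : ℝ≥0∞) ≤ ENNReal.ofReal δ * n := by
  rcases le_total n ⌈(1 - δ) * n⌉₊ with h | h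
  · simp [Nat.sub_eq_zero_of_le h]
  rw [← ENNReal.ofReal_natCast, ← ENNReal.ofReal_natCast n, ← ENNReal.ofReal_mul' n.cast_nonneg]
  refine ENNReal.ofReal_le_ofReal ?_
  rw [Nat.cast_sub h]
  linarith [Nat.le_ceil ((1 - δ) * n)]

theorem stmt_11_general (L : ℕ) (δ : ℝ)
    {Ω : Type*} [MeasurableSpace Ω] (μ : Measure Ω) [IsProbabilityMeasure μ]
    (s : Fin (L + 1) → Ω → ℝ) (hmeas : ∀ i, Measurable (s i))
    (hexch : ∀ σ : Equiv.Perm (Fin (L + 1)),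
      μ.map (fun ω i => s (σ i) ω) = μ.map (fun ω i => s i ω)) :
    1 - ENNReal.ofReal δ ≤
      μ {ω | ⌈(1 - δ) * (L + 1 : ℝ)⌉₊ ≤ L →
          s 0 ω ≤ orderStat L (fun i => s i.succ ω) ⌈(1 - δ) * (L + 1 : ℝ)⌉₊} := by
  set p := ⌈(1 - δ) * (L + 1 : ℝ)⌉₊
  by_cases hpL : p ≤ L
  swap
  · simp [hpL]
  set E := {ω | p ≤ rankCount (fun i => s i ω) 0}
  have hE : MeasurableSet E :=
    (measurable_rankCount 0).comp (measurable_pi_lambda _ hmeas) measurableSet_Ici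
  have hcover : Eᶜ ⊆ {ω | p ≤ L → s 0 ω ≤ orderStat L (fun i => s i.succ ω) p} :=
    fun ω hω _ => le_orderStat_of_card_lt hpL _ (by simpa [E, rankCount_zero] using hω)
  have hbound : μ E ≤ ENNReal.ofReal δ := by
    have h := Exchangeable.card_mul_measure_rankCount_ge_le hexch hmeas p 0
    rw [measure_univ, mul_one, Fintype.card_fin] at h
    have hsub := natCast_sub_ceil_le (L + 1) δ
    rw [Nat.cast_succ] at hsub
    rw [← ENNReal.mul_le_mul_iff_right (a := ((L + 1 : ℕ) : ℝ≥0∞)) (by simp) (by simp)]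
    exact h.trans (hsub.trans_eq (mul_comm _ _))
  calc 1 - ENNReal.ofReal δ ≤ 1 - μ E := tsub_le_tsub_left hbound 1
    _ = μ Eᶜ := (prob_compl_eq_one_sub hE).symm
    _ ≤ _ := measure_mono hcover

/-- marginal coverage guarantee of split conformal prediction. If
`s 0, …, s L` are exchangeable, then with probability at least `1 − δ`, `s 0` is below
the `p`-th order statistic of `s 1, …, s L, +∞`, where `p = ⌈(1−δ)(L+1)⌉` (the bound
being `+∞`, i.e. vacuous, when `p > L`). -/
theorem stmt_11 (L : ℕ) (δ : ℝ) (hδ : δ ∈ Set.Ioo (0 : ℝ) 1)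
    {Ω : Type*} [MeasurableSpace Ω] (μ : Measure Ω) [IsProbabilityMeasure μ]
    (s : Fin (L + 1) → Ω → ℝ) (hmeas : ∀ i, Measurable (s i))
    (hexch : ∀ σ : Equiv.Perm (Fin (L + 1)),
      μ.map (fun ω i => s (σ i) ω) = μ.map (fun ω i => s i ω)) :
    1 - ENNReal.ofReal δ ≤
      μ {ω | ⌈(1 - δ) * (L + 1 : ℝ)⌉₊ ≤ L →
          s 0 ω ≤ orderStat L (fun i => s i.succ ω) ⌈(1 - δ) * (L + 1 : ℝ)⌉₊} :=
  stmt_11_general L δ μ s hmeas hexch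
end
end

section
/- Let 𝒯_r = {T ∈ SE(3) : A₂(R s + t) ≤ b₂ + r·𝟏} where s is the Chebyshev center and r the Chebyshev radius of a polytope P(A₁,b₁) ⊆ ℝ³, and A₂ has unit-vector rows. Then 𝒯_r contains the set 𝒯 = {T ∈ SE(3) : ∃ p ∈ P(A₁,b₁), ∃ q ∈ P(A₂,b₂) with q = Rp + t}. -/
open Matrix Set MeasureTheory Pointwise

noncomputable section

lemma norm_toEuclideanLin_of_transpose_mul_self {n : Type*} [Fintype n] [DecidableEq n]
    {R : Matrix n n ℝ} (hR : Rᵀ * R = 1) (x : EuclideanSpace ℝ n) :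
    ‖R.toEuclideanLin x‖ = ‖x‖ := by
  have hdot : R *ᵥ x.ofLp ⬝ᵥ R *ᵥ x.ofLp = x.ofLp ⬝ᵥ x.ofLp := by
    rw [dotProduct_mulVec, ← mulVec_transpose, mulVec_mulVec, hR, one_mulVec]
  rw [norm_eq_sqrt_real_inner, norm_eq_sqrt_real_inner, EuclideanSpace.inner_eq_star_dotProduct,
    EuclideanSpace.inner_eq_star_dotProduct]
  simpa using congrArg Real.sqrt hdot

lemma act_eq_toEuclideanLin_add (T : Pose) (p : E3) : act T p = T.1.toEuclideanLin p + T.2 := rfl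

lemma dist_act_act {T : Pose} (hT : T.1ᵀ * T.1 = 1) (p q : E3) :
    dist (act T p) (act T q) = dist p q := by
  rw [dist_eq_norm, dist_eq_norm, act_eq_toEuclideanLin_add, act_eq_toEuclideanLin_add,
    add_sub_add_right_eq_sub, ← map_sub, norm_toEuclideanLin_of_transpose_mul_self hT]

lemma inner_le_inner_add_of_norm_eq_one_of_dist_le {F : Type*} [NormedAddCommGroup F]
    [InnerProductSpace ℝ F] {a x q : F} {r : ℝ} (ha : ‖a‖ = 1) (h : dist x q ≤ r) :
    inner ℝ a x ≤ inner ℝ a q + r :=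
  calc inner ℝ a x = inner ℝ a q + inner ℝ a (x - q) := by rw [← inner_add_right, add_sub_cancel]
    _ ≤ inner ℝ a q + ‖a‖ * ‖x - q‖ := by gcongr; exact real_inner_le_norm a (x - q)
    _ ≤ inner ℝ a q + r := by rw [ha, one_mul, ← dist_eq_norm]; gcongr

/-- the Chebyshev-radius backward enclosure 𝒯_r contains the exact
feasible pose set 𝒯. -/
theorem stmt_12 (M₁ M₂ : ℕ)
    (A₁ : Fin M₁ → E3) (b₁ : Fin M₁ → ℝ)
    (A₂ : Fin M₂ → E3) (b₂ : Fin M₂ → ℝ) (hA₂ : ∀ m, ‖A₂ m‖ = 1)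
    (s : E3) (r : ℝ)
    (hcheb : ∀ p : E3, (∀ m, (inner ℝ (A₁ m) p : ℝ) ≤ b₁ m) → ‖s - p‖ ≤ r) :
    {T : Pose | isSO3 T.1 ∧ ∃ p : E3, (∀ m, (inner ℝ (A₁ m) p : ℝ) ≤ b₁ m) ∧
        ∃ q : E3, (∀ m, (inner ℝ (A₂ m) q : ℝ) ≤ b₂ m) ∧ q = act T p} ⊆
      {T : Pose | isSO3 T.1 ∧ ∀ m, (inner ℝ (A₂ m) (act T s) : ℝ) ≤ b₂ m + r} := by
  rintro T ⟨hSO, p, hp, _, hq, rfl⟩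
  refine ⟨hSO, fun m => ?_⟩
  have hdist : dist (act T s) (act T p) ≤ r := by
    rw [dist_act_act hSO.1, dist_eq_norm]
    exact hcheb p hp
  linarith [inner_le_inner_add_of_norm_eq_one_of_dist_le (hA₂ m) hdist, hq m]
end
end

section
/- Let 𝒳₁ = {X ∈ SO(3) : dis(X,I) ≤ θ₁'}, let P₂ ⊆ ℝ³ be a polytope with vertex set V₂, let R̄₁ ∈ SO(3), and let A have unit rows a_m. Define b_m = max_{v∈V₂} max_{θ∈[0,θ₁'], w unit} ⟨Exp(θw)a_m, v⟩. Then the set R̄₁𝒳₁·P₂ = {R̄₁ X t₂ : X ∈ 𝒳₁, t₂ ∈ P₂} is contained in the polytope {y : A R̄₁ᵀ y ≤ b}. -/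
open Matrix Set MeasureTheory Pointwise

noncomputable section

/-!
For `X ∈ 𝒳₁` and `t₂ ∈ P₂` we have `⟪a_m, R̄₁ᵀ (R̄₁ X t₂)⟫ = ⟪Xᵀ a_m, t₂⟫`, and `Xᵀ` is again a
rotation, by the angle `dis(X, I) ≤ θ₁'` about some unit axis `w` (axis–angle form of `SO(3)`).
So the linear functional `⟪Xᵀ a_m, ·⟫` is at most `b_m` on the vertices of `P₂`, hence on `P₂`.

For the axis–angle form, write `t = tr X`. Cayley–Hamilton gives `X² = Xᵀ + t X - t`, hence
`(X - Xᵀ)² = (1 + t)(X + Xᵀ - 2)`. The skew part `X - Xᵀ = [a]ₓ` then satisfies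
`a aᵀ = (1 + t)(X + Xᵀ - (t - 1))` and `‖a‖² = (1 + t)(3 - t) = 4 sin² θ`. If `a ≠ 0`, the axis
is `a / ‖a‖`. If `a = 0`, either `X = 1` or `t = -1`; in the second case `(X + 1) / 2` is the
projection onto the axis.
-/

lemma norm_sq_eq_tv (w : E3) : ‖w‖ ^ 2 = tv w 0 ^ 2 + tv w 1 ^ 2 + tv w 2 ^ 2 := by
  simp [EuclideanSpace.real_norm_sq_eq, Fin.sum_univ_three, tv]

lemma tv_ofv (x : Fin 3 → ℝ) : tv (ofv x) = x := rfl

lemma trace_vecMulVec_tv (w : E3) : trace (vecMulVec (tv w) (tv w)) = ‖w‖ ^ 2 := by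
  rw [trace_vecMulVec, norm_sq_eq_tv]
  simp only [dotProduct, Fin.sum_univ_three]
  ring

lemma inner_ofv_mulVec (M : Matrix (Fin 3) (Fin 3) ℝ) (u v : E3) :
    inner ℝ u (ofv (M *ᵥ tv v)) = inner ℝ (ofv (Mᵀ *ᵥ tv u)) v := by
  change (M *ᵥ tv v) ⬝ᵥ tv u = tv v ⬝ᵥ (Mᵀ *ᵥ tv u)
  rw [mulVec_transpose, dotProduct_comm, dotProduct_mulVec, dotProduct_comm]

lemma hat_smul (r : ℝ) (w : E3) : hat (r • w) = r • hat w := by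
  ext i j; fin_cases i <;> fin_cases j <;> simp [hat, tv]

lemma hat_mul_hat (w : E3) :
    hat w * hat w = vecMulVec (tv w) (tv w) - ‖w‖ ^ 2 • (1 : Matrix (Fin 3) (Fin 3) ℝ) := by
  rw [norm_sq_eq_tv]
  ext i j; fin_cases i <;> fin_cases j <;>
    simp [hat, vecMulVec_apply, Matrix.mul_apply, Fin.sum_univ_three] <;> ring

lemma rod_eq_of_norm_eq_one {w : E3} (hw : ‖w‖ = 1) (θ : ℝ) :
    rod θ w = Real.cos θ • 1 + Real.sin θ • hat w + (1 - Real.cos θ) • vecMulVec (tv w) (tv w) := by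
  rw [rod, hat_mul_hat, hw]
  module

lemma eq_rod_of {X : Matrix (Fin 3) (Fin 3) ℝ} {θ : ℝ} {w : E3} (hw : ‖w‖ = 1)
    (hskew : X - Xᵀ = (2 * Real.sin θ) • hat w)
    (hsymm : X + Xᵀ = (2 * Real.cos θ) • 1 + (2 * (1 - Real.cos θ)) • vecMulVec (tv w) (tv w)) :
    X = rod θ w := by
  rw [rod_eq_of_norm_eq_one hw]
  linear_combination (norm := module) (1 / 2 : ℝ) • (hskew + hsymm)

def axis (X : Matrix (Fin 3) (Fin 3) ℝ) : E3 := ofv ![X 2 1 - X 1 2, X 0 2 - X 2 0, X 1 0 - X 0 1]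

lemma hat_axis (X : Matrix (Fin 3) (Fin 3) ℝ) : hat (axis X) = X - Xᵀ := by
  ext i j; fin_cases i <;> fin_cases j <;> simp [hat, axis, tv, ofv]

lemma rotDist_one_eq (X : Matrix (Fin 3) (Fin 3) ℝ) :
    rotDist X 1 = Real.arccos ((X.trace - 1) / 2) := by
  rw [rotDist, transpose_one, mul_one]

lemma rotDist_transpose_one (X : Matrix (Fin 3) (Fin 3) ℝ) : rotDist Xᵀ 1 = rotDist X 1 := by
  rw [rotDist_one_eq, rotDist_one_eq, trace_transpose]

-- Cayley–Hamilton for `3 × 3` matrices, solved for the adjugate.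
lemma adjugate_fin_three_eq {R : Type*} [CommRing R] (X : Matrix (Fin 3) (Fin 3) R) :
    X.adjugate = X * X - X.trace • X + X.adjugate.trace • 1 := by
  ext i j; fin_cases i <;> fin_cases j <;>
    simp [adjugate_fin_three, trace_fin_three, Matrix.mul_apply, Fin.sum_univ_three] <;> ring

lemma adjugate_add_one_fin_three {R : Type*} [CommRing R] (X : Matrix (Fin 3) (Fin 3) R) :
    (X + 1).adjugate = X.adjugate + X.trace • 1 - X + 1 := by
  ext i j; fin_cases i <;> fin_cases j <;> simp [adjugate_fin_three, trace_fin_three] <;> ring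

lemma exists_vecMulVec_eq_of_adjugate_eq_zero {K : Matrix (Fin 3) (Fin 3) ℝ} (hK : Kᵀ = K)
    (hadj : K.adjugate = 0) (htr : K.trace = 1) :
    ∃ w : E3, ‖w‖ = 1 ∧ vecMulVec (tv w) (tv w) = K := by
  have hminor : ∀ p i j, K p i * K p j = K p p * K i j := by
    have hsymm : ∀ i j, K j i = K i j := fun i j => congrFun (congrFun hK i) j
    rw [← Matrix.ext_iff] at hadj
    simp only [adjugate_fin_three, Fin.forall_fin_succ, hsymm 0 1, hsymm 0 2, hsymm 1 2, of_apply,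
      cons_val', cons_val_zero, cons_val_succ, cons_val_fin_one, Matrix.zero_apply,
      IsEmpty.forall_iff, and_true] at hadj
    intro p i j
    fin_cases p <;> fin_cases i <;> fin_cases j <;> simp [hsymm 0 1, hsymm 0 2, hsymm 1 2] <;>
      linarith [hadj]
  obtain ⟨p, hp⟩ : ∃ p, 0 < K p p := by
    by_contra! hle
    rw [trace_fin_three] at htr
    linarith [hle 0, hle 1, hle 2]
  set w : E3 := ofv fun i => K p i / √(K p p)
  have houter : vecMulVec (tv w) (tv w) = K := by
    ext i j
    rw [vecMulVec_apply]
    change K p i / √(K p p) * (K p j / √(K p p)) = K i j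
    rw [div_mul_div_comm, ← sq, Real.sq_sqrt hp.le, hminor, mul_div_cancel_left₀ _ hp.ne']
  refine ⟨w, ?_, houter⟩
  have hnorm := trace_vecMulVec_tv w
  rw [houter, htr] at hnorm
  exact (pow_eq_one_iff_of_nonneg (norm_nonneg w) two_ne_zero).mp hnorm.symm

namespace isSO3

variable {X : Matrix (Fin 3) (Fin 3) ℝ}

lemma mul_transpose (h : isSO3 X) : X * Xᵀ = 1 := mul_eq_one_comm.mp h.1

lemma transpose (h : isSO3 X) : isSO3 Xᵀ :=
  ⟨by rw [transpose_transpose, h.mul_transpose], by rw [det_transpose, h.2]⟩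

lemma adjugate_eq (h : isSO3 X) : X.adjugate = Xᵀ := by
  calc X.adjugate = X.adjugate * (X * Xᵀ) := by rw [h.mul_transpose, mul_one]
    _ = Xᵀ := by rw [← mul_assoc, adjugate_mul, h.2, one_smul, one_mul]

lemma mul_self (h : isSO3 X) : X * X = Xᵀ + X.trace • X - X.trace • 1 := by
  have hCH := adjugate_fin_three_eq X
  rw [h.adjugate_eq, trace_transpose] at hCH
  rw [hCH]
  abel

lemma sub_transpose_mul_self (h : isSO3 X) :
    (X - Xᵀ) * (X - Xᵀ) = (1 + X.trace) • (X + Xᵀ - (2 : ℝ) • 1) := by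
  have hT : Xᵀ * Xᵀ = X + X.trace • Xᵀ - X.trace • 1 := by
    rw [← transpose_mul, h.mul_self]
    simp
  simp only [sub_mul, mul_sub, h.1, h.mul_transpose, h.mul_self, hT]
  module

lemma norm_axis_sq (h : isSO3 X) : ‖axis X‖ ^ 2 = (1 + X.trace) * (3 - X.trace) := by
  have htr := congrArg trace h.sub_transpose_mul_self
  rw [← hat_axis, hat_mul_hat] at htr
  simp only [trace_sub, trace_smul, trace_add, trace_transpose, trace_vecMulVec_tv, trace_one,
    Fintype.card_fin, Nat.cast_ofNat, smul_eq_mul] at htr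
  linarith

lemma vecMulVec_axis (h : isSO3 X) :
    vecMulVec (tv (axis X)) (tv (axis X)) = (1 + X.trace) • (X + Xᵀ - (X.trace - 1) • 1) := by
  have hsq := h.sub_transpose_mul_self
  rw [← hat_axis, hat_mul_hat, h.norm_axis_sq, sub_eq_iff_eq_add] at hsq
  rw [hsq]
  module

lemma cos_rotDist_one (h : isSO3 X) : Real.cos (rotDist X 1) = (X.trace - 1) / 2 := by
  have := h.norm_axis_sq
  have h₁ : -1 ≤ X.trace := by nlinarith [sq_nonneg ‖axis X‖]
  have h₃ : X.trace ≤ 3 := by nlinarith [sq_nonneg ‖axis X‖]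
  rw [rotDist_one_eq, Real.cos_arccos] <;> linarith

lemma norm_axis_eq (h : isSO3 X) : ‖axis X‖ = 2 * Real.sin (rotDist X 1) := by
  rw [rotDist_one_eq, Real.sin_arccos, ← Real.sqrt_sq (norm_nonneg (axis X)), h.norm_axis_sq,
    show (1 + X.trace) * (3 - X.trace) = 2 ^ 2 * (1 - ((X.trace - 1) / 2) ^ 2) by ring,
    Real.sqrt_mul (by norm_num), Real.sqrt_sq zero_le_two]

lemma exists_eq_rod_of_axis_ne_zero (h : isSO3 X) (ha : axis X ≠ 0) :
    ∃ w : E3, ‖w‖ = 1 ∧ X = rod (rotDist X 1) w := by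
  set r := ‖axis X‖
  have hr : r ≠ 0 := norm_ne_zero_iff.mpr ha
  refine ⟨r⁻¹ • axis X, norm_smul_inv_norm ha, eq_rod_of (norm_smul_inv_norm ha) ?_ ?_⟩
  · rw [← h.norm_axis_eq, hat_smul, smul_smul, mul_inv_cancel₀ hr, one_smul, hat_axis]
  · have htv : tv (r⁻¹ • axis X) = r⁻¹ • tv (axis X) := rfl
    have hsq : r ^ 2 = (1 + X.trace) * (3 - X.trace) := h.norm_axis_sq
    have hcoef : 2 * (1 - (X.trace - 1) / 2) * r⁻¹ * r⁻¹ * (1 + X.trace) = 1 := by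
      field_simp
      linear_combination -hsq
    rw [htv, smul_vecMulVec, vecMulVec_smul, smul_smul, h.cos_rotDist_one, h.vecMulVec_axis,
      smul_smul, smul_smul, hcoef]
    module

lemma exists_eq_rod_of_axis_eq_zero (h : isSO3 X) (ha : axis X = 0) :
    ∃ w : E3, ‖w‖ = 1 ∧ X = rod (rotDist X 1) w := by
  have hsymm : Xᵀ = X := by
    have hskew := hat_axis X
    rw [ha, show hat 0 = 0 by simpa using hat_smul 0 0, eq_comm, sub_eq_zero] at hskew
    exact hskew.symm
  have hskew (w : E3) : X - Xᵀ = (2 * Real.sin (rotDist X 1)) • hat w := by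
    rw [← h.norm_axis_eq, ha, norm_zero, zero_smul, hsymm, sub_self]
  have hprod : (1 + X.trace) * (3 - X.trace) = 0 := by
    rw [← h.norm_axis_sq, ha, norm_zero, sq, zero_mul]
  rcases mul_eq_zero.mp hprod with ht | ht
  · -- a half-turn: `(X + 1) / 2` is the projection onto its axis
    have hK : ((1 / 2 : ℝ) • (X + 1))ᵀ = (1 / 2 : ℝ) • (X + 1) := by
      rw [transpose_smul, transpose_add, hsymm, transpose_one]
    have hadj : ((1 / 2 : ℝ) • (X + 1)).adjugate = 0 := by
      rw [adjugate_smul, adjugate_add_one_fin_three, h.adjugate_eq, hsymm,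
        show X.trace = -1 by linarith]
      module
    have htr : ((1 / 2 : ℝ) • (X + 1)).trace = 1 := by
      rw [trace_smul, trace_add, trace_one, Fintype.card_fin, smul_eq_mul]
      push_cast
      linarith
    obtain ⟨w, hw, houter⟩ := exists_vecMulVec_eq_of_adjugate_eq_zero hK hadj htr
    refine ⟨w, hw, eq_rod_of hw (hskew w) ?_⟩
    rw [houter, h.cos_rotDist_one, hsymm, show X.trace = -1 by linarith]
    module
  · have hsq : X * X = 1 := by simpa [hsymm] using h.mul_transpose
    have hCH := h.mul_self
    rw [hsq, hsymm, show X.trace = 3 by linarith] at hCH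
    have hX : X = 1 := by linear_combination (norm := module) (-1 / 4 : ℝ) • hCH
    refine ⟨EuclideanSpace.single 0 1, by simp, ?_⟩
    rw [hX]
    norm_num [rotDist, rod]

theorem exists_eq_rod (h : isSO3 X) : ∃ w : E3, ‖w‖ = 1 ∧ X = rod (rotDist X 1) w := by
  by_cases ha : axis X = 0
  · exact h.exists_eq_rod_of_axis_eq_zero ha
  · exact h.exists_eq_rod_of_axis_ne_zero ha

end isSO3

theorem stmt_16_general (θ₁' : ℝ)
    (V₂ : Finset E3)
    (R₁ : Matrix (Fin 3) (Fin 3) ℝ) (hR₁ : isSO3 R₁)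
    (M : ℕ) (A : Fin M → E3) (b : Fin M → ℝ)
    (hb : ∀ m, IsGreatest
      {x : ℝ | ∃ v ∈ V₂, ∃ θ ∈ Set.Icc 0 θ₁', ∃ w : E3, ‖w‖ = 1 ∧
        x = inner ℝ (ofv ((rod θ w).mulVec (tv (A m)))) v} (b m)) :
    {y : E3 | ∃ X : Matrix (Fin 3) (Fin 3) ℝ, isSO3 X ∧ rotDist X 1 ≤ θ₁' ∧
        ∃ t₂ ∈ convexHull ℝ (V₂ : Set E3), y = ofv ((R₁ * X).mulVec (tv t₂))} ⊆
      {y : E3 | ∀ m, (inner ℝ (A m) (ofv (R₁.transpose.mulVec (tv y))) : ℝ) ≤ b m} := by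
  rintro _ ⟨X, hX, hdist, t₂, ht₂, rfl⟩ m
  obtain ⟨w, hw, hrod⟩ := hX.transpose.exists_eq_rod
  rw [rotDist_transpose_one] at hrod
  rw [tv_ofv, mulVec_mulVec, ← mul_assoc, hR₁.1, one_mul, inner_ofv_mulVec, hrod]
  have hhalf : Convex ℝ {z : E3 | inner ℝ (ofv (rod (rotDist X 1) w *ᵥ tv (A m))) z ≤ b m} :=
    convex_halfSpace_le (innerₛₗ ℝ _).isLinear _
  refine convexHull_min (fun v hv => (hb m).2 ?_) hhalf ht₂
  exact ⟨v, hv, rotDist X 1, ⟨Real.arccos_nonneg _, hdist⟩, w, hw, rfl⟩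

/-- the set R̄₁𝒳₁·P₂ is contained in the polytope {y : A R̄₁ᵀ y ≤ b},
where b_m is the maximum of ⟨Exp(θw)a_m, v⟩ over vertices v of P₂, θ ∈ [0,θ₁'] and
unit axes w. -/
theorem stmt_16 (θ₁' : ℝ) (hθ : θ₁' ∈ Set.Icc 0 Real.pi)
    (V₂ : Finset E3) (hV₂ : V₂.Nonempty)
    (R₁ : Matrix (Fin 3) (Fin 3) ℝ) (hR₁ : isSO3 R₁)
    (M : ℕ) (A : Fin M → E3) (hA : ∀ m, ‖A m‖ = 1) (b : Fin M → ℝ)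
    (hb : ∀ m, IsGreatest
      {x : ℝ | ∃ v ∈ V₂, ∃ θ ∈ Set.Icc 0 θ₁', ∃ w : E3, ‖w‖ = 1 ∧
        x = inner ℝ (ofv ((rod θ w).mulVec (tv (A m)))) v} (b m)) :
    {y : E3 | ∃ X : Matrix (Fin 3) (Fin 3) ℝ, isSO3 X ∧ rotDist X 1 ≤ θ₁' ∧
        ∃ t₂ ∈ convexHull ℝ (V₂ : Set E3), y = ofv ((R₁ * X).mulVec (tv t₂))} ⊆
      {y : E3 | ∀ m, (inner ℝ (A m) (ofv (R₁.transpose.mulVec (tv y))) : ℝ) ≤ b m} :=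
  stmt_16_general θ₁' V₂ R₁ hR₁ M A b hb
end
end
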